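/- arXiv:1708.07059 — 5 statements merged into one kernel-verified Lean document; each statement's English description precedes it below -/
import Mathlib

section
/- Let n ≥ 1, let s¹ = (s¹₁,…,s¹ₙ) and s² = (s²₁,…,s²ₙ) be two probability vectors (nonnegative entries summing to 1) such that for every i ∈ {1,…,n}, ∑_{j=i}^{n} s¹_j ≤ ∑_{j=i}^{n} s²_j (i.e., s¹ is smaller than s² in the usual stochastic order). Let G : ℝ → [0,1] be any function. Then for every t ∈ ℝ, ∑_{i=1}^{n} s¹_i · (1 − E(n,i,G(t))) ≤ ∑_{i=1}^{n} s²_i · (1 − E(n,i,G(t))). (This is the stochastic-order case of Theorem 1, Part 1: two coherent systems with the same IID component distribution and stochastically ordered signatures have stochastically ordered lifetimes.) -/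
open Finset

/-- `E n i a = ∑_{j=i}^n C(n,j) a^j (1-a)^(n-j)`. -/
noncomputable def E (n i : ℕ) (a : ℝ) : ℝ :=
  ∑ j ∈ Finset.Icc i n, (n.choose j : ℝ) * a ^ j * (1 - a) ^ (n - j)

lemma E_antitone (n : ℕ) (a : ℝ) (ha0 : 0 ≤ a) (ha1 : a ≤ 1) {i j : ℕ} (hij : i ≤ j) :
    E n j a ≤ E n i a := by
  apply Finset.sum_le_sum_of_subset_of_nonneg
  · exact Finset.Icc_subset_Icc_left hij
  · intro k _ _
    have h1 : (0:ℝ) ≤ 1 - a := by linarith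
    positivity

lemma tele (f : ℕ → ℝ) : ∀ i, 1 ≤ i → f 1 + ∑ k ∈ Finset.Icc 2 i, (f k - f (k-1)) = f i := by
  intro i hi
  induction i with
  | zero => omega
  | succ m ih =>
    rcases Nat.eq_or_lt_of_le hi with h | h
    · simp [← h]
    · have hm : 1 ≤ m := by omega
      rw [Finset.sum_Icc_succ_top (by omega : 2 ≤ m + 1)]
      have := ih hm
      simp only [Nat.add_sub_cancel]
      linarith

/-- Theorem 1, Part 1 (stochastic order case): if two signatures are stochastically
ordered and the common IID component distribution function is `G`, then the system
reliability functions are pointwise ordered. -/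
theorem stmt_0 (n : ℕ) (hn : 1 ≤ n) (s₁ s₂ : ℕ → ℝ)
    (hs₁nonneg : ∀ i ∈ Finset.Icc 1 n, 0 ≤ s₁ i)
    (hs₂nonneg : ∀ i ∈ Finset.Icc 1 n, 0 ≤ s₂ i)
    (hs₁sum : ∑ i ∈ Finset.Icc 1 n, s₁ i = 1)
    (hs₂sum : ∑ i ∈ Finset.Icc 1 n, s₂ i = 1)
    (hst : ∀ i ∈ Finset.Icc 1 n, ∑ j ∈ Finset.Icc i n, s₁ j ≤ ∑ j ∈ Finset.Icc i n, s₂ j)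
    (G : ℝ → ℝ) (hG : ∀ t, G t ∈ Set.Icc (0 : ℝ) 1) :
    ∀ t : ℝ,
      ∑ i ∈ Finset.Icc 1 n, s₁ i * (1 - E n i (G t)) ≤
        ∑ i ∈ Finset.Icc 1 n, s₂ i * (1 - E n i (G t)) := by
  intro t
  obtain ⟨ha0, ha1⟩ := hG t
  set a := G t with ha
  set f : ℕ → ℝ := fun i => 1 - E n i a with hf
  set D : ℕ → ℝ := fun i => s₂ i - s₁ i with hD
  rw [← sub_nonneg, ← Finset.sum_sub_distrib]
  have key : ∑ i ∈ Finset.Icc 1 n, (s₂ i * f i - s₁ i * f i)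
      = ∑ i ∈ Finset.Icc 1 n, D i * f i := by
    apply Finset.sum_congr rfl
    intro i _
    simp [hD]; ring
  rw [key]
  have hDsum : ∑ i ∈ Finset.Icc 1 n, D i = 0 := by
    simp [hD, Finset.sum_sub_distrib, hs₁sum, hs₂sum]
  have hexp : ∑ i ∈ Finset.Icc 1 n, D i * f i
      = ∑ i ∈ Finset.Icc 1 n, D i * (f 1 + ∑ k ∈ Finset.Icc 2 i, (f k - f (k-1))) := by
    apply Finset.sum_congr rfl
    intro i hi
    rw [tele f i (Finset.mem_Icc.mp hi).1]
  rw [hexp]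
  have hexp2 : ∑ i ∈ Finset.Icc 1 n, D i * (f 1 + ∑ k ∈ Finset.Icc 2 i, (f k - f (k-1)))
      = (∑ i ∈ Finset.Icc 1 n, D i) * f 1
        + ∑ i ∈ Finset.Icc 1 n, ∑ k ∈ Finset.Icc 2 i, D i * (f k - f (k-1)) := by
    rw [Finset.sum_mul]
    rw [← Finset.sum_add_distrib]
    apply Finset.sum_congr rfl
    intro i _
    rw [mul_add, Finset.mul_sum]
  rw [hexp2, hDsum, zero_mul, zero_add]
  have hswap : ∑ i ∈ Finset.Icc 1 n, ∑ k ∈ Finset.Icc 2 i, D i * (f k - f (k-1))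
      = ∑ k ∈ Finset.Icc 2 n, ∑ i ∈ Finset.Icc k n, D i * (f k - f (k-1)) := by
    apply Finset.sum_comm'
    intro i k
    simp only [Finset.mem_Icc]
    omega
  rw [hswap]
  apply Finset.sum_nonneg
  intro k hk
  obtain ⟨hk2, hkn⟩ := Finset.mem_Icc.mp hk
  have hd : 0 ≤ f k - f (k-1) := by
    have := E_antitone n a ha0 ha1 (show k - 1 ≤ k by omega)
    simp only [hf]
    linarith
  have hT : 0 ≤ ∑ i ∈ Finset.Icc k n, D i := by
    have hmem : k ∈ Finset.Icc 1 n := Finset.mem_Icc.mpr ⟨by omega, hkn⟩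
    have := hst k hmem
    simp only [hD, Finset.sum_sub_distrib]
    linarith
  calc (0:ℝ) = (∑ i ∈ Finset.Icc k n, D i) * 0 := by ring
    _ ≤ (∑ i ∈ Finset.Icc k n, D i) * (f k - f (k-1)) := by
        apply mul_le_mul_of_nonneg_left hd hT
    _ = ∑ i ∈ Finset.Icc k n, D i * (f k - f (k-1)) := by rw [Finset.sum_mul]
end

section
/- Let n ≥ 1, let s = (s₁,…,sₙ) be a probability vector, and let G₁, G₂ : ℝ → [0,1] be two functions with G₁(t) ≥ G₂(t) for all t (i.e., the distribution G₁ is smaller than G₂ in the usual stochastic order). Then for every t ∈ ℝ, ∑_{i=1}^{n} s_i · (1 − E(n,i,G₁(t))) ≤ ∑_{i=1}^{n} s_i · (1 − E(n,i,G₂(t))). (This is Theorem 1, Part 2: two coherent systems with the same signature and stochastically ordered IID component distributions have stochastically ordered lifetimes.) -/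
open Polynomial Finset

lemma E_eq_eval_sum_bernsteinPolynomial (n i : ℕ) (a : ℝ) :
    E n i a = (∑ ν ∈ Icc i n, bernsteinPolynomial ℝ n ν).eval a := by
  simp [E, bernsteinPolynomial, eval_finsetSum]

lemma bernsteinPolynomial_eval_nonneg (n ν : ℕ) {x : ℝ} (hx : x ∈ Set.Icc (0 : ℝ) 1) :
    0 ≤ (bernsteinPolynomial ℝ n ν).eval x := by
  simp only [bernsteinPolynomial, eval_mul, eval_pow, eval_sub, eval_one, eval_X, eval_natCast]
  exact mul_nonneg (mul_nonneg (n.choose ν).cast_nonneg (pow_nonneg hx.1 _))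
    (pow_nonneg (sub_nonneg.2 hx.2) _)

lemma derivative_sum_Icc_bernsteinPolynomial (R : Type*) [CommRing R] (n k : ℕ) :
    derivative (∑ ν ∈ Icc (k + 1) n, bernsteinPolynomial R n ν) =
      n * bernsteinPolynomial R (n - 1) k := by
  rcases le_or_gt k n with hk | hk
  · have htop : (n : R[X]) * bernsteinPolynomial R (n - 1) n = 0 := by
      rcases n.eq_zero_or_pos with rfl | hn
      · rw [Nat.cast_zero, zero_mul]
      · rw [bernsteinPolynomial.eq_zero_of_lt R (Nat.sub_lt hn one_pos), mul_zero]
    rw [derivative_sum, ← Ico_add_one_right_eq_Icc, ← sum_Ico_add']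
    simp_rw [bernsteinPolynomial.derivative_succ,
      ← neg_sub (bernsteinPolynomial R (n - 1) (_ + 1))]
    rw [← mul_sum, sum_neg_distrib, sum_Ico_sub _ hk, neg_sub, mul_sub, htop, sub_zero]
  · rw [Icc_eq_empty (by omega), sum_empty, derivative_zero,
      bernsteinPolynomial.eq_zero_of_lt R (by omega : n - 1 < k), mul_zero]

lemma E_monotoneOn (n : ℕ) {i : ℕ} (hi : 1 ≤ i) : MonotoneOn (E n i) (Set.Icc 0 1) := by
  obtain ⟨k, rfl⟩ := Nat.exists_eq_add_of_le' hi
  set p := ∑ ν ∈ Icc (k + 1) n, bernsteinPolynomial ℝ n ν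
  rw [show E n (k + 1) = fun a => p.eval a from funext (E_eq_eval_sum_bernsteinPolynomial n _)]
  refine monotoneOn_of_deriv_nonneg (convex_Icc 0 1) p.continuousOn p.differentiableOn
    fun x hx => ?_
  rw [Polynomial.deriv, derivative_sum_Icc_bernsteinPolynomial, eval_mul, eval_natCast]
  exact mul_nonneg n.cast_nonneg (bernsteinPolynomial_eval_nonneg _ _ (interior_subset hx))

theorem stmt_1_general (n : ℕ) (s : ℕ → ℝ)
    (hsnonneg : ∀ i ∈ Finset.Icc 1 n, 0 ≤ s i)
    (G₁ G₂ : ℝ → ℝ)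
    (hG₁ : ∀ t, G₁ t ∈ Set.Icc (0 : ℝ) 1) (hG₂ : ∀ t, G₂ t ∈ Set.Icc (0 : ℝ) 1)
    (hst : ∀ t, G₂ t ≤ G₁ t) :
    ∀ t : ℝ,
      ∑ i ∈ Finset.Icc 1 n, s i * (1 - E n i (G₁ t)) ≤
        ∑ i ∈ Finset.Icc 1 n, s i * (1 - E n i (G₂ t)) := by
  intro t
  refine sum_le_sum fun i hi => mul_le_mul_of_nonneg_left ?_ (hsnonneg i hi)
  exact sub_le_sub_left (E_monotoneOn n (mem_Icc.1 hi).1 (hG₂ t) (hG₁ t) (hst t)) 1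

/-- Theorem 1, Part 2: two coherent systems with the same signature and stochastically
ordered IID component distributions (`G₁ ≥ G₂` pointwise, i.e. `G₁ ≤_st G₂`) have
stochastically ordered lifetimes. -/
theorem stmt_1 (n : ℕ) (hn : 1 ≤ n) (s : ℕ → ℝ)
    (hsnonneg : ∀ i ∈ Finset.Icc 1 n, 0 ≤ s i)
    (hssum : ∑ i ∈ Finset.Icc 1 n, s i = 1)
    (G₁ G₂ : ℝ → ℝ)
    (hG₁ : ∀ t, G₁ t ∈ Set.Icc (0 : ℝ) 1) (hG₂ : ∀ t, G₂ t ∈ Set.Icc (0 : ℝ) 1)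
    (hst : ∀ t, G₂ t ≤ G₁ t) :
    ∀ t : ℝ,
      ∑ i ∈ Finset.Icc 1 n, s i * (1 - E n i (G₁ t)) ≤
        ∑ i ∈ Finset.Icc 1 n, s i * (1 - E n i (G₂ t)) :=
  stmt_1_general n s hsnonneg G₁ G₂ hG₁ hG₂ hst
end

section
/- Let X₁, X₂, Y₁ be jointly independent real-valued random variables on a probability space such that P(X₁ > t) ≤ P(X₂ > t) for all t ∈ ℝ (i.e., X₁ ≤_st X₂). Then for all t ∈ ℝ, P(min(max(X₁,Y₁), X₂) > t) ≥ P(min(X₁, max(X₂,Y₁)) > t); that is, T^{[I]} = min(max(X₁,Y₁), X₂) is stochastically larger than T^{[II]} = min(X₁, max(X₂,Y₁)). -/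
open MeasureTheory ProbabilityTheory Set

/-
With `A = {X₁ > t}`, `B = {X₂ > t}`, `C = {Y₁ > t}`, the two systems survive past `t` on
`A ∩ (B ∪ C)` and `(A ∪ C) ∩ B`. By inclusion–exclusion these have measures
`μ(A ∩ B) + μ(A ∩ C) - μ(A ∩ B ∩ C)` and `μ(A ∩ B) + μ(B ∩ C) - μ(A ∩ B ∩ C)`, so it suffices that
`μ(A ∩ C) = μ A μ C ≤ μ B μ C = μ(B ∩ C)`, which is independence plus `X₁ ≤_st X₂`.
-/

lemma measure_inter_union_le_measure_union_inter {Ω : Type*} [MeasurableSpace Ω]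
    {μ : Measure Ω} [IsFiniteMeasure μ] {A B C : Set Ω} (hA : MeasurableSet A)
    (hB : MeasurableSet B) (h : μ (A ∩ C) ≤ μ (B ∩ C)) :
    μ (A ∩ (B ∪ C)) ≤ μ ((A ∪ C) ∩ B) := by
  have incl_excl_left : μ (A ∩ (B ∪ C)) + μ (A ∩ B ∩ C) = μ (A ∩ C) + μ (A ∩ B) := by
    rw [← measure_union_add_inter (A ∩ C) (hA.inter hB)]
    congr 2 <;> ext <;> simp only [mem_inter_iff, mem_union] <;> tauto
  have incl_excl_right : μ ((A ∪ C) ∩ B) + μ (A ∩ B ∩ C) = μ (B ∩ C) + μ (A ∩ B) := by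
    rw [← measure_union_add_inter (B ∩ C) (hA.inter hB)]
    congr 2 <;> ext <;> simp only [mem_inter_iff, mem_union] <;> tauto
  rw [← ENNReal.add_le_add_iff_right (measure_ne_top μ (A ∩ B ∩ C)), incl_excl_left,
    incl_excl_right]
  gcongr

theorem stmt_5_general {Ω : Type*} [MeasurableSpace Ω] (μ : Measure Ω) [IsProbabilityMeasure μ]
    (X₁ X₂ Y₁ : Ω → ℝ)
    (hX₁ : Measurable X₁) (hX₂ : Measurable X₂)
    (hindep : iIndepFun (m := fun _ => Real.measurableSpace) ![X₁, X₂, Y₁] μ)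
    (hst : ∀ t : ℝ, μ {ω | X₁ ω > t} ≤ μ {ω | X₂ ω > t}) :
    ∀ t : ℝ,
      μ {ω | min (X₁ ω) (max (X₂ ω) (Y₁ ω)) > t} ≤
        μ {ω | min (max (X₁ ω) (Y₁ ω)) (X₂ ω) > t} := by
  intro t
  have hprod : ∀ i j : Fin 3, i ≠ j →
      μ (![X₁, X₂, Y₁] i ⁻¹' Ioi t ∩ ![X₁, X₂, Y₁] j ⁻¹' Ioi t) =
        μ (![X₁, X₂, Y₁] i ⁻¹' Ioi t) * μ (![X₁, X₂, Y₁] j ⁻¹' Ioi t) := fun i j hij =>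
    (hindep.indepFun hij).measure_inter_preimage_eq_mul _ _ measurableSet_Ioi measurableSet_Ioi
  have survival_II : {ω | min (X₁ ω) (max (X₂ ω) (Y₁ ω)) > t} =
      X₁ ⁻¹' Ioi t ∩ (X₂ ⁻¹' Ioi t ∪ Y₁ ⁻¹' Ioi t) := by
    ext; simp
  have survival_I : {ω | min (max (X₁ ω) (Y₁ ω)) (X₂ ω) > t} =
      (X₁ ⁻¹' Ioi t ∪ Y₁ ⁻¹' Ioi t) ∩ X₂ ⁻¹' Ioi t := by
    ext; simp
  rw [survival_II, survival_I]
  refine measure_inter_union_le_measure_union_inter (hX₁ measurableSet_Ioi)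
    (hX₂ measurableSet_Ioi) ?_
  calc μ (X₁ ⁻¹' Ioi t ∩ Y₁ ⁻¹' Ioi t)
      = μ (X₁ ⁻¹' Ioi t) * μ (Y₁ ⁻¹' Ioi t) := hprod 0 2 (by decide)
    _ ≤ μ (X₂ ⁻¹' Ioi t) * μ (Y₁ ⁻¹' Ioi t) := mul_le_mul_left (hst t) _
    _ = μ (X₂ ⁻¹' Ioi t ∩ Y₁ ⁻¹' Ioi t) := (hprod 1 2 (by decide)).symm

/-- For a 2-component series system with jointly independent component lifetimes
`X₁, X₂` and spare `Y₁`, if `X₁ ≤_st X₂`, then the active-redundancy policy putting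
the spare in parallel to `X₁` is stochastically better:
`min(max(X₁,Y₁), X₂) ≥_st min(X₁, max(X₂,Y₁))`. -/
theorem stmt_5 {Ω : Type*} [MeasurableSpace Ω] (μ : Measure Ω) [IsProbabilityMeasure μ]
    (X₁ X₂ Y₁ : Ω → ℝ)
    (hX₁ : Measurable X₁) (hX₂ : Measurable X₂) (hY₁ : Measurable Y₁)
    (hindep : iIndepFun (m := fun _ => Real.measurableSpace) ![X₁, X₂, Y₁] μ)
    (hst : ∀ t : ℝ, μ {ω | X₁ ω > t} ≤ μ {ω | X₂ ω > t}) :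
    ∀ t : ℝ,
      μ {ω | min (X₁ ω) (max (X₂ ω) (Y₁ ω)) > t} ≤
        μ {ω | min (max (X₁ ω) (Y₁ ω)) (X₂ ω) > t} :=
  stmt_5_general μ X₁ X₂ Y₁ hX₁ hX₂ hindep hst
end

section
/- Consider the six-component monotone structure function φ^{[1]} : {0,1}⁶ → {0,1} obtained from the bridge structure φ(x₁,…,x₅) = (x₁∧x₃) ∨ (x₂∧x₄) ∨ (x₁∧x₄∧x₅) ∨ (x₂∧x₃∧x₅) by replacing x₁ with x₁ ∨ x₆ (an active spare on component 1). For a permutation σ of {1,…,6} (interpreted as the order in which the six components fail), let N(σ) be the least k such that the system is failed when exactly components σ(1),…,σ(k) are failed and all others work. Then the signature vector s^{[1]}, whose k-th entry is #{σ : N(σ) = k}/6!, equals (0, 1/15, 7/30, 1/2, 1/5, 0). -/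
/-- Bridge structure (minimal path sets {1,3},{2,4},{1,4,5},{2,3,5}) with an active
spare (component 6, index 5) placed on component 1 (index 0). -/
def phi1 (x : Fin 6 → Bool) : Bool :=
  ((x 0 || x 5) && x 2) || (x 1 && x 3) || ((x 0 || x 5) && x 3 && x 4) ||
    (x 1 && x 2 && x 4)

/-- Component state after the first `k` failures in the failure ordering `σ`:
component `j` works iff it is not among `σ 0, …, σ (k-1)`. -/
def stateAfter (σ : Equiv.Perm (Fin 6)) (k : ℕ) : Fin 6 → Bool :=
  fun j => decide (∀ m : Fin 6, (m : ℕ) < k → σ m ≠ j)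

/-- The index of the component failure that brings the system down, for the structure
`phi1`: the least `k` such that the system is failed when exactly
`σ 0, …, σ (k-1)` are failed. -/
noncomputable def N1 (σ : Equiv.Perm (Fin 6)) : ℕ :=
  sInf {k | phi1 (stateAfter σ k) = false}

lemma six_mem (σ : Equiv.Perm (Fin 6)) : phi1 (stateAfter σ 6) = false := by
  have h : ∀ j : Fin 6, stateAfter σ 6 j = false := by
    intro j
    simp only [stateAfter, decide_eq_false_iff_not]
    intro h
    exact h (σ.symm j) (σ.symm j).isLt (σ.apply_symm_apply j)
  simp [phi1, h]

set_option maxRecDepth 10000 in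
lemma phi1_mono : ∀ x y : Fin 6 → Bool, (∀ j, x j ≤ y j) → phi1 x ≤ phi1 y := by
  decide

lemma stateAfter_anti (σ : Equiv.Perm (Fin 6)) {k k' : ℕ} (h : k ≤ k') (j : Fin 6) :
    stateAfter σ k' j ≤ stateAfter σ k j := by
  cases hkj : stateAfter σ k' j with
  | false => exact Bool.false_le _
  | true =>
    have H := of_decide_eq_true hkj
    have hk : stateAfter σ k j = true :=
      decide_eq_true (fun m hm => H m (lt_of_lt_of_le hm h))
    simp [hk]

lemma phi1_anti (σ : Equiv.Perm (Fin 6)) {k k' : ℕ} (h : k ≤ k') :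
    phi1 (stateAfter σ k') ≤ phi1 (stateAfter σ k) :=
  phi1_mono _ _ (stateAfter_anti σ h)

lemma N1_eq (σ : Equiv.Perm (Fin 6)) (n : ℕ) :
    N1 σ = n + 1 ↔
      (phi1 (stateAfter σ (n + 1)) = false ∧ phi1 (stateAfter σ n) = true) := by
  have hne : {k | phi1 (stateAfter σ k) = false}.Nonempty := ⟨6, six_mem σ⟩
  constructor
  · rintro h
    have h1 : phi1 (stateAfter σ (N1 σ)) = false := Nat.sInf_mem hne
    rw [h] at h1
    have h2 := Nat.notMem_of_lt_sInf (show n < N1 σ by omega)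
    simp only [Set.mem_setOf_eq] at h2
    exact ⟨h1, by simpa using h2⟩
  · rintro ⟨h1, h2⟩
    refine le_antisymm (Nat.sInf_le h1) ?_
    by_contra h
    push_neg at h
    have hmem : phi1 (stateAfter σ (N1 σ)) = false := Nat.sInf_mem hne
    have : phi1 (stateAfter σ n) ≤ phi1 (stateAfter σ (N1 σ)) := phi1_anti σ (by omega)
    rw [h2, hmem] at this
    exact absurd this (by decide)

def cnt (n : ℕ) : ℕ :=
  (Finset.univ.filter (fun σ : Equiv.Perm (Fin 6) =>
    phi1 (stateAfter σ (n + 1)) = false ∧ phi1 (stateAfter σ n) = true)).card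

set_option maxRecDepth 100000 in
lemma cnt0 : cnt 0 = 0 := by decide
set_option maxRecDepth 100000 in
lemma cnt1 : cnt 1 = 48 := by decide
set_option maxRecDepth 100000 in
lemma cnt2 : cnt 2 = 168 := by decide
set_option maxRecDepth 100000 in
lemma cnt3 : cnt 3 = 360 := by decide
set_option maxRecDepth 100000 in
lemma cnt4 : cnt 4 = 144 := by decide
set_option maxRecDepth 100000 in
lemma cnt5 : cnt 5 = 0 := by decide

lemma card_eq_cnt (n : ℕ) :
    (Finset.univ.filter (fun σ : Equiv.Perm (Fin 6) => N1 σ = n + 1)).card = cnt n := by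
  unfold cnt
  congr 1
  exact Finset.filter_congr (fun σ _ => by rw [N1_eq])

/-- The signature of the bridge system with an active spare on component 1 is
`(0, 1/15, 7/30, 1/2, 1/5, 0)`. -/
theorem stmt_9 :
    (fun k : Fin 6 =>
        ((Finset.univ.filter (fun σ : Equiv.Perm (Fin 6) => N1 σ = (k : ℕ) + 1)).card : ℚ)
          / (Nat.factorial 6 : ℚ)) =
      ![0, 1/15, 7/30, 1/2, 1/5, 0] := by
  funext k
  fin_cases k <;>
    simp [card_eq_cnt, cnt0, cnt1, cnt2, cnt3, cnt4, cnt5, Nat.factorial,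
      Matrix.cons_val_zero, Matrix.cons_val_succ] <;>
    first
      | rfl
      | norm_num
end

section
/- Let θ > 0, let K(x₁,x₂,x₃) = (x₁^{−θ} + x₂^{−θ} + x₃^{−θ} − 2)^{−1/θ} be the trivariate Clayton survival copula, and let F̄₁, F̄₂, F̄₃ : (0,∞) → (0,1] be survival functions. Define W^{[I]}(a,b,c) = K(a,b,1) + K(1,b,c) − K(a,b,c) and W^{[II]}(a,b,c) = K(a,b,1) + K(a,1,c) − K(a,b,c). Then W^{[I]}(F̄₁(t),F̄₂(t),F̄₃(t)) ≥ W^{[II]}(F̄₁(t),F̄₂(t),F̄₃(t)) for all t > 0 if and only if F̄₁(t) ≤ F̄₂(t) for all t > 0. Consequently (since the systems under the two policies have equal signatures and an increasing common transformation h⁻¹), T^{[I]} ≥_st T^{[II]} if and only if X₁ ≤_st X₂. -/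
open Real

/-- The trivariate Clayton survival copula with parameter `θ`. -/
noncomputable def clayton (θ x₁ x₂ x₃ : ℝ) : ℝ :=
  (x₁ ^ (-θ) + x₂ ^ (-θ) + x₃ ^ (-θ) - 2) ^ (-1/θ)

/-- Structure-dependence function of Policy I (active spare on component 1). -/
noncomputable def WI (θ a b c : ℝ) : ℝ :=
  clayton θ a b 1 + clayton θ 1 b c - clayton θ a b c

/-- Structure-dependence function of Policy II (active spare on component 2). -/
noncomputable def WII (θ a b c : ℝ) : ℝ :=
  clayton θ a b 1 + clayton θ a 1 c - clayton θ a b c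

lemma key_iff (θ : ℝ) (hθ : 0 < θ) {a b c : ℝ}
    (ha : a ∈ Set.Ioc (0:ℝ) 1) (hb : b ∈ Set.Ioc (0:ℝ) 1) (hc : c ∈ Set.Ioc (0:ℝ) 1) :
    (WII θ a b c ≤ WI θ a b c ↔ a ≤ b) := by
  have h1 : ∀ x : ℝ, x ∈ Set.Ioc (0:ℝ) 1 → 1 ≤ x ^ (-θ) := fun x hx =>
    Real.one_le_rpow_of_pos_of_le_one_of_nonpos hx.1 hx.2 (neg_nonpos.mpr hθ.le)
  have ha' := h1 a ha
  have hb' := h1 b hb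
  have hc' := h1 c hc
  have hA : (0:ℝ) < a ^ (-θ) + (1:ℝ) ^ (-θ) + c ^ (-θ) - 2 := by
    rw [Real.one_rpow]; linarith
  have hB : (0:ℝ) < (1:ℝ) ^ (-θ) + b ^ (-θ) + c ^ (-θ) - 2 := by
    rw [Real.one_rpow]; linarith
  unfold WI WII clayton
  rw [sub_le_sub_iff_right, add_le_add_iff_left,
    Real.rpow_le_rpow_iff_of_neg hA hB (div_neg_of_neg_of_pos (by norm_num) hθ)]
  have h0 : (1:ℝ) ^ (-θ) = 1 := Real.one_rpow _
  constructor
  · intro h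
    have h2 : b ^ (-θ) ≤ a ^ (-θ) := by linarith
    exact (Real.rpow_le_rpow_iff_of_neg hb.1 ha.1 (neg_neg_of_pos hθ)).mp h2
  · intro h
    have h2 : b ^ (-θ) ≤ a ^ (-θ) :=
      (Real.rpow_le_rpow_iff_of_neg hb.1 ha.1 (neg_neg_of_pos hθ)).mpr h
    linarith

/-- For dependent component lifetimes coupled by the Clayton survival copula, the
reliability of the improved system under Policy I dominates that under Policy II at
all times iff component 1 is stochastically weaker than component 2:
`W^{[I]}(F̄₁(t),F̄₂(t),F̄₃(t)) ≥ W^{[II]}(F̄₁(t),F̄₂(t),F̄₃(t))` for all `t > 0` iff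
`F̄₁(t) ≤ F̄₂(t)` for all `t > 0` (i.e. `T^{[I]} ≥_st T^{[II]}` iff `X₁ ≤_st X₂`). -/
theorem stmt_14 (θ : ℝ) (hθ : 0 < θ) (F₁ F₂ F₃ : ℝ → ℝ)
    (hF₁ : ∀ t > (0:ℝ), F₁ t ∈ Set.Ioc (0:ℝ) 1)
    (hF₂ : ∀ t > (0:ℝ), F₂ t ∈ Set.Ioc (0:ℝ) 1)
    (hF₃ : ∀ t > (0:ℝ), F₃ t ∈ Set.Ioc (0:ℝ) 1) :
    (∀ t > (0:ℝ), WII θ (F₁ t) (F₂ t) (F₃ t) ≤ WI θ (F₁ t) (F₂ t) (F₃ t)) ↔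
      (∀ t > (0:ℝ), F₁ t ≤ F₂ t) := by
  constructor <;> intro h t ht <;>
    [exact (key_iff θ hθ (hF₁ t ht) (hF₂ t ht) (hF₃ t ht)).mp (h t ht);
     exact (key_iff θ hθ (hF₁ t ht) (hF₂ t ht) (hF₃ t ht)).mpr (h t ht)]
end
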